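/- arXiv:0904.1871 — 2 statements merged into one kernel-verified Lean document; each statement's English description precedes it below -/
import Mathlib

section
/- Let d ≥ 1, k ≥ 2, n = dk³, Y = {0, 1, k, 2k, ..., dk, dk²}. Then every integer m with 0 ≤ m ≤ n − 1 is a sum of at most 3k − 2 elements of Y. -/
/-
Write `m < d k³` in the mixed radix `(k, d, k, k)`: `m = q·dk² + c·dk + e·k + b` with
`q, c, b < k` and `e < d`. Each of `dk²`, `dk`, `ek` (note `0 ∈ Y` covers `e = 0`) and `1` lies
in `Y`, so `m` is a sum of `q + c + 1 + b ≤ 3(k - 1) + 1 = 3k - 2` elements of `Y`.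
-/

open Filter Set Pointwise

/-- `nfold A h` is the `h`-fold sumset of `A` (sums of exactly `h` elements). -/
def nfold (A : Set ℤ) : ℕ → Set ℤ
  | 0 => {0}
  | n + 1 => A + nfold A n

/-- The `h`-fold sumset of `A` contains all sufficiently large naturals. -/
def CoversAt (A : Set ℤ) (h : ℕ) : Prop :=
  ∀ᶠ m : ℕ in Filter.atTop, (m : ℤ) ∈ nfold A h

/-- `A` is an asymptotic basis for ℕ. -/
def IsAsympBasis (A : Set ℤ) : Prop := ∃ h, CoversAt A h

/-- The order `G(A)` of an asymptotic basis. -/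
noncomputable def basisOrder (A : Set ℤ) : ℕ := sInf {h | CoversAt A h}

/-- Lower asymptotic density of a set of integers. -/
noncomputable def lowerDensity (S : Set ℤ) : ℝ :=
  Filter.liminf (fun n : ℕ => ((S ∩ Set.Icc 1 (n : ℤ)).ncard : ℝ) / n) Filter.atTop

/-- Diameter of a set of integers. -/
noncomputable def diam (S : Set ℤ) : ℤ := sSup S - sInf S

/-- `h`-fold sumset in `ZMod n`. -/
def nfoldZ {n : ℕ} (A : Set (ZMod n)) : ℕ → Set (ZMod n)
  | 0 => {0}
  | t + 1 => A + nfoldZ A t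

lemma nfold_eq_nsmul (A : Set ℤ) (n : ℕ) : nfold A n = n • A := by
  induction n with
  | zero => rfl
  | succ n ih => rw [nfold, ih, succ_nsmul']

lemma Nat.exists_eq_mul_add_of_lt_mul {M a B : ℕ} (hM : M < a * B) :
    ∃ q < a, ∃ r < B, M = q * B + r := by
  have hB : 0 < B := Nat.pos_of_ne_zero fun h => by simp [h] at hM
  exact ⟨M / B, Nat.div_lt_of_lt_mul (by rwa [mul_comm]), M % B, Nat.mod_lt M hB,
    (Nat.div_add_mod' M B).symm⟩

lemma Nat.exists_mixed_radix_of_lt {M d k : ℕ} (hM : M < d * k ^ 3) :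
    ∃ q < k, ∃ c < k, ∃ e < d, ∃ b < k, M = q * (d * k ^ 2) + c * (d * k) + e * k + b := by
  obtain ⟨q, hq, r, hr, rfl⟩ := exists_eq_mul_add_of_lt_mul (a := k) (B := d * k ^ 2)
    (by rwa [show k * (d * k ^ 2) = d * k ^ 3 by ring])
  obtain ⟨c, hc, r', hr', rfl⟩ := exists_eq_mul_add_of_lt_mul (a := k) (B := d * k)
    (by rwa [show k * (d * k) = d * k ^ 2 by ring])
  obtain ⟨e, he, b, hb, rfl⟩ := exists_eq_mul_add_of_lt_mul hr'
  exact ⟨q, hq, c, hc, e, he, b, hb, by ring⟩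

theorem stmt6_general (d k : ℕ) (hd : 1 ≤ d)
    (Y : Set ℤ)
    (hY : Y = {0, 1, (d : ℤ) * (k : ℤ) ^ 2} ∪
      {x : ℤ | ∃ j : ℕ, 1 ≤ j ∧ j ≤ d ∧ x = (j : ℤ) * k})
    (m : ℤ) (hm0 : 0 ≤ m) (hm1 : m ≤ (d : ℤ) * (k : ℤ) ^ 3 - 1) :
    m ∈ nfold Y (3 * k - 2) := by
  lift m to ℕ using hm0
  obtain ⟨q, hq, c, hc, e, he, b, hb, rfl⟩ :=
    Nat.exists_mixed_radix_of_lt (M := m) (d := d) (k := k) (by zify; omega)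
  have h0 : (0 : ℤ) ∈ Y := by simp [hY]
  have h1 : (1 : ℤ) ∈ Y := by simp [hY]
  have hdk2 : (d : ℤ) * k ^ 2 ∈ Y := by simp [hY]
  have hdk : (d : ℤ) * k ∈ Y := by rw [hY]; exact Or.inr ⟨d, hd, le_rfl, rfl⟩
  have hek : (e : ℤ) * k ∈ Y := by
    rcases Nat.eq_zero_or_pos e with rfl | he0
    · simpa using h0
    · rw [hY]; exact Or.inr ⟨e, he0, he.le, rfl⟩
  have hsum : ((q * (d * k ^ 2) + c * (d * k) + e * k + b : ℕ) : ℤ) ∈ (q + c + 1 + b) • Y := by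
    rw [add_nsmul, add_nsmul, add_nsmul, one_nsmul]
    convert add_mem_add (add_mem_add (add_mem_add (nsmul_mem_nsmul (n := q) hdk2)
      (nsmul_mem_nsmul (n := c) hdk)) hek) (nsmul_mem_nsmul (n := b) h1) using 1
    push_cast
    simp only [nsmul_eq_mul, mul_one]
  rw [nfold_eq_nsmul]
  exact nsmul_subset_nsmul_right h0 (by omega) hsum

theorem stmt6 (d k : ℕ) (hd : 1 ≤ d) (hk : 2 ≤ k)
    (Y : Set ℤ)
    (hY : Y = {0, 1, (d : ℤ) * (k : ℤ) ^ 2} ∪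
      {x : ℤ | ∃ j : ℕ, 1 ≤ j ∧ j ≤ d ∧ x = (j : ℤ) * k})
    (m : ℤ) (hm0 : 0 ≤ m) (hm1 : m ≤ (d : ℤ) * (k : ℤ) ^ 3 - 1) :
    m ∈ nfold Y (3 * k - 2) :=
  stmt6_general d k hd Y hY m hm0 hm1
end

section
/- Let h, μ ≥ 2 be integers, n = h(h−1)μ + 1, and A* = {x ∈ N : x mod n ∈ {μ, hμ}}. Then A* is an asymptotic basis for N of order exactly n − 1 = h(h−1)μ. -/
open Filter Set Pointwise

lemma mem_nfold_one {A : Set ℤ} {a : ℤ} (ha : a ∈ A) : a ∈ nfold A 1 := by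
  have : a = a + 0 := by ring
  rw [this]
  exact Set.add_mem_add ha rfl

lemma nfold_add_mem {A : Set ℤ} {x y : ℤ} {s t : ℕ} (hx : x ∈ nfold A s)
    (hy : y ∈ nfold A t) : x + y ∈ nfold A (s + t) := by
  induction s generalizing x with
  | zero =>
    simp only [nfold, Set.mem_singleton_iff] at hx
    subst hx; simpa using hy
  | succ s ih =>
    obtain ⟨a, ha, z, hz, rfl⟩ := hx
    have e : a + z + y = a + (z + y) := by ring
    rw [show s + 1 + t = (s + t) + 1 by omega, e]
    exact Set.add_mem_add ha (ih hz)

lemma nsmul_mem_nfold {A : Set ℤ} {a : ℤ} (ha : a ∈ A) (s : ℕ) :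
    (s : ℤ) * a ∈ nfold A s := by
  induction s with
  | zero => simp [nfold]
  | succ s ih =>
    have : ((s + 1 : ℕ) : ℤ) * a = a + (s : ℤ) * a := by push_cast; ring
    rw [this]
    exact Set.add_mem_add ha ih

lemma nfold_res {n μ u : ℕ} {A : Set ℤ}
    (hA : ∀ a ∈ A, (a : ZMod n) = ((μ : ℕ) : ZMod n) ∨ (a : ZMod n) = ((μ + u : ℕ) : ZMod n))
    {x : ℤ} {t : ℕ} (hx : x ∈ nfold A t) :
    ∃ b ≤ t, (x : ZMod n) = ((t * μ + b * u : ℕ) : ZMod n) := by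
  induction t generalizing x with
  | zero =>
    simp only [nfold, Set.mem_singleton_iff] at hx
    exact ⟨0, le_rfl, by subst hx; simp⟩
  | succ t ih =>
    obtain ⟨a, ha, z, hz, rfl⟩ := hx
    obtain ⟨b, hb, hzres⟩ := ih hz
    rcases hA a ha with h1 | h1
    · refine ⟨b, by omega, ?_⟩
      push_cast at hzres h1 ⊢
      rw [h1, hzres]; ring
    · refine ⟨b + 1, by omega, ?_⟩
      push_cast at hzres h1 ⊢
      rw [h1, hzres]; ring

theorem stmt10 (h μ n : ℕ) (hh : 2 ≤ h) (hμ : 2 ≤ μ) (hn : n = h * (h - 1) * μ + 1)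
    (Astar : Set ℤ)
    (hA : Astar = {x : ℤ | 0 ≤ x ∧
      (x % (n : ℤ) = (μ : ℤ) ∨ x % (n : ℤ) = (h : ℤ) * (μ : ℤ))}) :
    IsAsympBasis Astar ∧ basisOrder Astar = n - 1 := by
  suffices hmain : CoversAt Astar (n - 1) ∧ (∀ s, CoversAt Astar s → n - 1 ≤ s) by
    exact ⟨⟨n - 1, hmain.1⟩, le_antisymm (Nat.sInf_le hmain.1)
      (le_csInf ⟨n - 1, hmain.1⟩ fun s hs => hmain.2 s hs)⟩
  set u : ℕ := (h - 1) * μ with hu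
  have hu2 : 2 ≤ u := by
    have : 1 * 2 ≤ (h - 1) * μ := Nat.mul_le_mul (by omega) hμ
    omega
  have hun : n = h * u + 1 := by rw [hn, hu, Nat.mul_assoc]
  have hμu : μ + u = h * μ := by
    have : μ + (h - 1) * μ = (1 + (h - 1)) * μ := by ring
    rw [hu, this, show 1 + (h - 1) = h by omega]
  have hhu : h * μ ≤ h * u := Nat.mul_le_mul_left h (by
    have : 1 * μ ≤ (h - 1) * μ := Nat.mul_le_mul (by omega) le_rfl
    omega)
  have hμn : μ < n := by omega
  have hhμn : h * μ < n := by omega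
  have hn5 : 5 ≤ n := by
    have : 2 * 2 ≤ h * u := Nat.mul_le_mul hh hu2
    omega
  haveI : NeZero n := ⟨by omega⟩
  have hcop : Nat.Coprime u n := by
    rw [hun, show h * u + 1 = 1 + u * h by ring]
    exact (Nat.coprime_add_mul_left_right u 1 h).mpr (Nat.coprime_one_right u)
  -- elements of Astar
  have helemμ : (μ : ℤ) ∈ Astar := by
    rw [hA]
    exact ⟨by positivity, Or.inl (Int.emod_eq_of_lt (by positivity) (by exact_mod_cast hμn))⟩
  have helemhμ : ((h * μ : ℕ) : ℤ) ∈ Astar := by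
    rw [hA]
    refine ⟨by positivity, Or.inr ?_⟩
    push_cast
    exact Int.emod_eq_of_lt (by positivity) (by exact_mod_cast hhμn)
  -- residues of Astar in ZMod n
  have hAres : ∀ a ∈ Astar, (a : ZMod n) = ((μ : ℕ) : ZMod n) ∨
      (a : ZMod n) = ((μ + u : ℕ) : ZMod n) := by
    intro a ha
    rw [hA] at ha
    obtain ⟨-, hmod | hmod⟩ := ha
    · left
      have : (a : ZMod n) = ((μ : ℤ) : ZMod n) := by
        rw [ZMod.intCast_eq_intCast_iff]
        show a % n = (μ : ℤ) % n
        rw [hmod, Int.emod_eq_of_lt (by positivity) (by exact_mod_cast hμn)]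
      rw [this]; push_cast; rfl
    · right
      have : (a : ZMod n) = (((h * μ : ℕ) : ℤ) : ZMod n) := by
        rw [ZMod.intCast_eq_intCast_iff]
        show a % n = ((h * μ : ℕ) : ℤ) % n
        rw [hmod, Int.emod_eq_of_lt (by positivity) (by exact_mod_cast hhμn)]
        push_cast; ring
      rw [this, hμu]; push_cast; ring
  constructor
  · -- cover at n - 1
    set t : ℕ := n - 1 with ht
    rw [CoversAt, eventually_atTop]
    refine ⟨n * (h * μ), fun m hm => ?_⟩
    set b : ℕ := (((m : ZMod n) - ((t * μ : ℕ) : ZMod n)) * ((u : ℕ) : ZMod n)⁻¹).val with hb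
    have hbn : b < n := ZMod.val_lt _
    have hbt : b ≤ t := by omega
    have hkey : ((t * μ + b * u : ℕ) : ZMod n) = (m : ZMod n) := by
      push_cast
      rw [hb, ZMod.natCast_val, ZMod.cast_id]
      push_cast
      linear_combination ((m : ZMod n) - (t : ZMod n) * (μ : ZMod n)) *
        ZMod.coe_mul_inv_eq_one u hcop
    have hdvd : (n : ℤ) ∣ (m : ℤ) - ((t * μ + b * u : ℕ) : ℤ) := by
      rw [← ZMod.intCast_zmod_eq_zero_iff_dvd]
      push_cast
      push_cast at hkey
      linear_combination -hkey
    obtain ⟨k, hk⟩ := hdvd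
    have hble : t * μ + b * u ≤ n * (h * μ) := by
      calc t * μ + b * u ≤ t * μ + t * u := by gcongr
        _ = t * (μ + u) := by ring
        _ = t * (h * μ) := by rw [hμu]
        _ ≤ n * (h * μ) := Nat.mul_le_mul_right _ (by omega)
    have hk0 : 0 ≤ k := by
      rcases le_or_gt 0 k with h' | h'
      · exact h'
      exfalso
      have h1 : (n : ℤ) * k < 0 :=
        mul_neg_of_pos_of_neg (by exact_mod_cast (show 0 < n by omega)) h'
      have h2 : 0 ≤ (m : ℤ) - ((t * μ + b * u : ℕ) : ℤ) := by
        rw [sub_nonneg]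
        exact_mod_cast hble.trans hm
      linarith
    have ht1 : 1 ≤ t := by omega
    rcases Nat.eq_zero_or_pos b with hb0 | hb1
    · have hel : (μ : ℤ) + (n : ℤ) * k ∈ Astar := by
        rw [hA]
        refine ⟨by positivity, Or.inl ?_⟩
        rw [Int.add_mul_emod_self_left]
        exact Int.emod_eq_of_lt (by positivity) (by exact_mod_cast hμn)
      have hdecomp : (m : ℤ) = ((μ : ℤ) + (n : ℤ) * k) + ((t - 1 : ℕ) : ℤ) * (μ : ℤ) := by
        push_cast [hb0] at hk
        push_cast [Nat.cast_sub ht1]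
        linarith
      rw [hdecomp]
      have := nfold_add_mem (mem_nfold_one hel) (nsmul_mem_nfold helemμ (t - 1))
      rwa [show 1 + (t - 1) = t by omega] at this
    · have hel : ((h * μ : ℕ) : ℤ) + (n : ℤ) * k ∈ Astar := by
        rw [hA]
        refine ⟨by positivity, Or.inr ?_⟩
        rw [Int.add_mul_emod_self_left]
        rw [Int.emod_eq_of_lt (by positivity) (by exact_mod_cast hhμn)]
        push_cast; ring
      have hucast : (u : ℤ) = ((h : ℤ) - 1) * (μ : ℤ) := by
        rw [hu]
        push_cast [Nat.cast_sub (show 1 ≤ h by omega)]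
        ring
      have hdecomp : (m : ℤ) = (((h * μ : ℕ) : ℤ) + (n : ℤ) * k)
          + ((b - 1 : ℕ) : ℤ) * ((h * μ : ℕ) : ℤ) + ((t - b : ℕ) : ℤ) * (μ : ℤ) := by
        push_cast at hk
        push_cast [Nat.cast_sub hb1, Nat.cast_sub hbt]
        linear_combination hk + (b : ℤ) * hucast
      rw [hdecomp]
      have := nfold_add_mem (nfold_add_mem (mem_nfold_one hel)
        (nsmul_mem_nfold helemhμ (b - 1))) (nsmul_mem_nfold helemμ (t - b))
      rwa [show 1 + (b - 1) + (t - b) = t by omega] at this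
  · intro s hs
    by_contra hlt
    push_neg at hlt
    have hex : ∃ r : ZMod n, r ∉ (Finset.range (s + 1)).image
        (fun b => ((s * μ + b * u : ℕ) : ZMod n)) := by
      by_contra hall
      push_neg at hall
      have hsub : (Finset.univ : Finset (ZMod n)) ⊆ _ := fun r _ => hall r
      have hc := Finset.card_le_card hsub
      rw [Finset.card_univ, ZMod.card] at hc
      have hc2 := Finset.card_image_le (s := Finset.range (s + 1))
        (f := fun b => ((s * μ + b * u : ℕ) : ZMod n))
      rw [Finset.card_range] at hc2
      omega
    obtain ⟨r, hr⟩ := hex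
    rw [CoversAt, eventually_atTop] at hs
    obtain ⟨N, hN⟩ := hs
    have hmem := hN (r.val + N * n) (by
      have : N * 1 ≤ N * n := Nat.mul_le_mul_left N (by omega)
      omega)
    obtain ⟨b, hb, hres⟩ := nfold_res hAres hmem
    apply hr
    rw [Finset.mem_image]
    refine ⟨b, Finset.mem_range.mpr (by omega), ?_⟩
    refine hres.symm.trans ?_
    push_cast
    rw [ZMod.natCast_val, ZMod.cast_id, ZMod.natCast_self]
    ring
end
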